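/- arXiv:2307.10865 — 3 statements merged into one kernel-verified Lean document; each statement's English description precedes it below -/
import Mathlib

section
/- Let G be a finite connected graph with pairwise distinct edge weights and let T be its maximum spanning tree. For any two vertices u and v, the minimum edge weight along the unique path in T from u to v equals the maximum over all paths in G from u to v of the minimum edge weight along the path (the bottleneck value). -/
open SimpleGraph

/-- Edges are preserved when relaxing a walk to a larger graph. -/
lemma edges_mapLe' {V : Type*} {G G' : SimpleGraph V} (h : G ≤ G') {u v : V}
    (p : G.Walk u v) : (p.mapLe h).edges = p.edges := by
  induction p with
  | nil => rfl
  | cons _ _ ih => simp [ih]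

/-- Crossing-edge lemma: a walk between vertices in different components of `H`
contains an edge crossing the cut. -/
lemma cross_edge' {V : Type*} {H G : SimpleGraph V} {u v : V} (q : G.Walk u v)
    (h : ¬ H.Reachable u v) :
    ∃ a b : V, s(a, b) ∈ q.edges ∧ H.Reachable u a ∧ ¬ H.Reachable u b := by
  induction q with
  | nil => exact absurd (Reachable.refl _) h
  | @cons u c v hadj q ih =>
    by_cases huc : H.Reachable u c
    · have hcv : ¬ H.Reachable c v := fun hr => h (huc.trans hr)
      obtain ⟨a, b, hab, hca, hcb⟩ := ih hcv
      exact ⟨a, b, List.mem_cons_of_mem _ hab, huc.trans hca,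
        fun hub => hcb (huc.symm.trans hub)⟩
    · exact ⟨u, c, List.mem_cons_self, Reachable.refl _, huc⟩

/-- After deleting a single edge `s(x,y)` from `H`, every vertex that had a walk
to `t` can still reach `t`, `x`, or `y`. -/
lemma reach_del' {V : Type*} {H : SimpleGraph V} {x y z t : V} (r : H.Walk z t) :
    (H.deleteEdges {s(x, y)}).Reachable z t ∨ (H.deleteEdges {s(x, y)}).Reachable z x ∨
      (H.deleteEdges {s(x, y)}).Reachable z y := by
  induction r with
  | nil => exact Or.inl (Reachable.refl _)
  | @cons z c t hadj r ih =>
    by_cases he : s(z, c) = s(x, y)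
    · rcases Sym2.eq_iff.mp he with ⟨rfl, rfl⟩ | ⟨rfl, rfl⟩
      · exact Or.inr (Or.inl (Reachable.refl _))
      · exact Or.inr (Or.inr (Reachable.refl _))
    · have hadj' : (H.deleteEdges {s(x, y)}).Adj z c := by
        rw [SimpleGraph.deleteEdges_adj]
        exact ⟨hadj, by simpa using he⟩
      rcases ih with h | h | h
      · exact Or.inl (hadj'.reachable.trans h)
      · exact Or.inr (Or.inl (hadj'.reachable.trans h))
      · exact Or.inr (Or.inr (hadj'.reachable.trans h))

/-- Total weight of the edges of a finite simple graph. -/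
noncomputable def graphWeight {V : Type*} [Fintype V] (H : SimpleGraph V)
    (w : Sym2 V → ℝ) : ℝ :=
  ∑ e ∈ (Set.toFinite H.edgeSet).toFinset, w e

/-- `T` is a maximum spanning tree of `G` with respect to weights `w`. -/
def IsMaxSpanningTree {V : Type*} [Fintype V] (G : SimpleGraph V)
    (w : Sym2 V → ℝ) (T : G.Subgraph) : Prop :=
  T.IsSpanning ∧ T.spanningCoe.IsTree ∧
    ∀ T' : G.Subgraph, T'.IsSpanning → T'.spanningCoe.IsTree →
      graphWeight T'.spanningCoe w ≤ graphWeight T.spanningCoe w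

/-- In a finite connected graph with distinct edge weights, the minimum edge
weight along the unique path in the maximum spanning tree from `u` to `v`
equals the maximum over all paths in `G` from `u` to `v` of the minimum edge
weight along the path (the bottleneck value). -/
theorem maxSpanningTree_bottleneck {V : Type*} [Fintype V]
    (G : SimpleGraph V) (hG : G.Connected)
    (w : Sym2 V → ℝ) (hw : Set.InjOn w G.edgeSet)
    (T : G.Subgraph) (hT : IsMaxSpanningTree G w T)
    (u v : V) (p : T.spanningCoe.Walk u v) (hp : p.IsPath) :
    IsGreatest
      {x : WithTop ℝ | ∃ q : G.Walk u v, q.IsPath ∧ x = (q.edges.map w).minimum}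
      ((p.edges.map w).minimum) := by
  classical
  have hle : T.spanningCoe ≤ G := T.spanningCoe_le
  obtain ⟨-, htree, hmax⟩ := hT
  have hconn := htree.isConnected
  have hacyc := htree.IsAcyclic
  constructor
  · exact ⟨p.mapLe hle, hp.mapLe hle, by rw [edges_mapLe']⟩
  · rintro x ⟨q, hq, rfl⟩
    by_contra hlt
    rw [not_le] at hlt
    -- the minimum over `p` is attained at some edge `s(x,y)`
    obtain ⟨m, hmin⟩ := WithTop.ne_top_iff_exists.mp (ne_top_of_lt hlt)
    have hmem : m ∈ p.edges.map w := List.minimum_mem hmin.symm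
    obtain ⟨e, heP, hwe⟩ := List.mem_map.mp hmem
    obtain ⟨x, y, rfl⟩ : ∃ x y, e = s(x, y) := by
      induction e using Sym2.ind with | _ x y => exact ⟨x, y, rfl⟩
    have hadjxy : T.spanningCoe.Adj x y := p.adj_of_mem_edges heP
    set H' : SimpleGraph V := T.spanningCoe.deleteEdges {s(x, y)} with hH'
    have hH'le : H' ≤ T.spanningCoe := SimpleGraph.deleteEdges_le _
    -- the edge is a bridge of the tree
    have hbridge : ¬ H'.Reachable x y :=
      (isBridge_iff.mp (isAcyclic_iff_forall_adj_isBridge.mp hacyc hadjxy))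
    -- u and v are separated by deleting the edge
    have hcut : ¬ H'.Reachable u v := by
      rintro ⟨r⟩
      have hr2 : ((r.toPath : H'.Walk u v).mapLe hH'le).IsPath :=
        (r.toPath.2).mapLe hH'le
      have := hacyc.path_unique ⟨(r.toPath : H'.Walk u v).mapLe hH'le, hr2⟩ ⟨p, hp⟩
      have hedges : s(x, y) ∈ ((r.toPath : H'.Walk u v).mapLe hH'le).edges := by
        rw [Subtype.mk.injEq] at this
        rw [this]; exact heP
      rw [edges_mapLe'] at hedges
      have := (r.toPath : H'.Walk u v).edges_subset_edgeSet hedges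
      rw [SimpleGraph.edgeSet_deleteEdges] at this
      exact this.2 rfl
    obtain ⟨a, b, hfq, hua, hnub⟩ := cross_edge' q hcut
    have hGab : G.Adj a b := q.adj_of_mem_edges hfq
    -- the crossing edge is strictly heavier
    have hmlt : w s(x, y) < w s(a, b) := by
      have h1 : ((q.edges.map w).minimum : WithTop ℝ) ≤ (w s(a, b) : WithTop ℝ) :=
        List.minimum_le_of_mem' (List.mem_map_of_mem (f := w) hfq)
      have h2 : ((w s(x, y) : WithTop ℝ)) < (w s(a, b) : WithTop ℝ) := by
        rw [hwe, hmin]; exact lt_of_lt_of_le hlt h1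
      exact_mod_cast h2
    -- the crossing edge is not a tree edge
    have hnotT : ¬ T.spanningCoe.Adj a b := by
      intro hadj
      by_cases hfe : s(a, b) = s(x, y)
      · rw [hfe] at hmlt; exact lt_irrefl _ hmlt
      · have hH'ab : H'.Adj a b := by
          rw [hH', SimpleGraph.deleteEdges_adj]
          exact ⟨hadj, by simpa using hfe⟩
        exact hnub (hua.trans hH'ab.reachable)
    -- the exchanged subgraph
    let T2 : G.Subgraph :=
      { verts := Set.univ
        Adj := fun c d => H'.Adj c d ∨ (c = a ∧ d = b) ∨ (c = b ∧ d = a)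
        adj_sub := by
          rintro c d (h | ⟨rfl, rfl⟩ | ⟨rfl, rfl⟩)
          · exact T.adj_sub (hH'le h)
          · exact hGab
          · exact hGab.symm
        edge_vert := fun _ => Set.mem_univ _
        symm := by
          constructor
          rintro c d (h | ⟨rfl, rfl⟩ | ⟨rfl, rfl⟩)
          · exact Or.inl h.symm
          · exact Or.inr (Or.inr ⟨rfl, rfl⟩)
          · exact Or.inr (Or.inl ⟨rfl, rfl⟩) }
    have hSadj : ∀ c d, T2.spanningCoe.Adj c d ↔
        (H'.Adj c d ∨ (c = a ∧ d = b) ∨ (c = b ∧ d = a)) := fun _ _ => Iff.rfl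
    have hle' : H' ≤ T2.spanningCoe := fun c d h => Or.inl h
    -- every vertex reaches x or y in H'
    have sideC : ∀ z : V, H'.Reachable z x ∨ H'.Reachable z y := by
      intro z
      obtain ⟨r⟩ := hconn.preconnected z x
      rcases reach_del' (x := x) (y := y) r with h | h | h
      exacts [Or.inl h, Or.inl h, Or.inr h]
    have habS : T2.spanningCoe.Adj a b := Or.inr (Or.inl ⟨rfl, rfl⟩)
    have hxyS : T2.spanningCoe.Reachable x y := by
      rcases sideC u with hux | huy
      · have hby : H'.Reachable b y := by
          rcases sideC b with hbx | hby
          · exact absurd (hux.trans hbx.symm) hnub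
          · exact hby
        exact (((hux.symm.trans hua).mono hle').trans habS.reachable).trans (hby.mono hle')
      · have hbx : H'.Reachable b x := by
          rcases sideC b with hbx | hby
          · exact hbx
          · exact absurd (huy.trans hby.symm) hnub
        exact ((hbx.symm.mono hle').trans habS.symm.reachable).trans
          ((hua.symm.trans huy).mono hle')
    have toX : ∀ z, T2.spanningCoe.Reachable z x := by
      intro z
      rcases sideC z with h | h
      · exact h.mono hle'
      · exact (h.mono hle').trans hxyS.symm
    have hSconn : T2.spanningCoe.Connected := by
      have : Nonempty V := hG.nonempty
      exact ⟨fun c d => (toX c).trans (toX d).symm⟩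
    have hSacyc : T2.spanningCoe.IsAcyclic := by
      intro z c hc
      by_cases hfc : s(a, b) ∈ c.edges
      · have hreach := (adj_and_reachable_delete_edges_iff_exists_cycle.mpr
          ⟨z, c, hc, hfc⟩).2
        have hle2 : T2.spanningCoe.deleteEdges {s(a, b)} ≤ H' := by
          intro c' d' hcd
          rw [SimpleGraph.deleteEdges_adj] at hcd
          rcases hcd.1 with h | ⟨rfl, rfl⟩ | ⟨rfl, rfl⟩
          · exact h
          · exact absurd rfl hcd.2
          · exact absurd (Set.mem_singleton_iff.mpr Sym2.eq_swap) hcd.2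
        exact hnub (hua.trans (hreach.mono hle2))
      · have hc' := SimpleGraph.Walk.IsCycle.toDeleteEdges T2.spanningCoe ({s(a, b)} : Set (Sym2 V)) hc
          (fun e' he' hmem' => hfc ((Set.mem_singleton_iff.mp hmem') ▸ he'))
        have hle2 : T2.spanningCoe.deleteEdges {s(a, b)} ≤ T.spanningCoe := by
          intro c' d' hcd
          rw [SimpleGraph.deleteEdges_adj] at hcd
          rcases hcd.1 with h | ⟨rfl, rfl⟩ | ⟨rfl, rfl⟩
          · exact hH'le h
          · exact absurd rfl hcd.2
          · exact absurd (Set.mem_singleton_iff.mpr Sym2.eq_swap) hcd.2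
        exact hacyc _ (hc'.mapLe hle2)
    have hStree : T2.spanningCoe.IsTree := ⟨hSconn, hSacyc⟩
    have hwle := hmax T2 (fun z => Set.mem_univ z) hStree
    -- edge set computation
    have hE : T2.spanningCoe.edgeSet =
        (T.spanningCoe.edgeSet \ {s(x, y)}) ∪ {s(a, b)} := by
      ext e'
      induction e' using Sym2.ind with
      | _ c d =>
        simp only [mem_edgeSet, hSadj, hH', SimpleGraph.deleteEdges_adj,
          Set.mem_union, Set.mem_diff, Set.mem_singleton_iff, Sym2.eq_iff] <;> tauto
    have heT : s(x, y) ∈ (Set.toFinite T.spanningCoe.edgeSet).toFinset := by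
      rw [Set.Finite.mem_toFinset]; exact hadjxy
    have hfT : s(a, b) ∉ (Set.toFinite T.spanningCoe.edgeSet).toFinset := by
      rw [Set.Finite.mem_toFinset]; exact hnotT
    have hB : (Set.toFinite T2.spanningCoe.edgeSet).toFinset =
        insert s(a, b) (((Set.toFinite T.spanningCoe.edgeSet).toFinset).erase s(x, y)) := by
      ext e'
      simp only [Set.Finite.mem_toFinset, hE, Finset.mem_insert, Finset.mem_erase,
        Set.mem_union, Set.mem_diff, Set.mem_singleton_iff, Set.Finite.mem_toFinset] <;> tauto
    have hsum : graphWeight T2.spanningCoe w =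
        w s(a, b) + (graphWeight T.spanningCoe w - w s(x, y)) := by
      unfold graphWeight
      rw [hB, Finset.sum_insert (by
        intro hmem'
        exact hfT (Finset.mem_of_mem_erase hmem')),
        Finset.sum_erase_eq_sub heT]
    rw [hsum] at hwle
    linarith
end

section
/- Let W be an n-by-m matrix with entries in [0,1], interpreted as the weights of the complete bipartite graph G_W on parts A (rows) and B (columns), with all entries distinct. Let NP_p(W) = (1 + sum over edge weights w in the maximum spanning tree of G_W of (1-w)^p)^(1/p). Then NP_p(W) >= ( sum over columns b of (1 - max over rows a of W[a,b])^p + sum over rows a of (1 - max over columns b of W[a,b])^p )^(1/p). -/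
/-- The edge-weight function on the complete bipartite graph induced by the
matrix `W`: the edge between row `a` and column `b` gets weight `W a b`. -/
noncomputable def bipWeight {n m : ℕ} (W : Fin n → Fin m → ℝ) :
    Sym2 (Fin n ⊕ Fin m) → ℝ :=
  Sym2.lift ⟨fun x y =>
    match x, y with
    | .inl a, .inr b => W a b
    | .inr b, .inl a => W a b
    | _, _ => 0,
    by rintro (a | b) (a' | b') <;> rfl⟩

lemma getVert_mem_support' {V : Type*} {G : SimpleGraph V} {u v : V}
    (p : G.Walk u v) (i : ℕ) : p.getVert i ∈ p.support := by
  induction p generalizing i with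
  | nil => simp [SimpleGraph.Walk.getVert]
  | cons h q ih =>
    cases i with
    | zero => simp [SimpleGraph.Walk.getVert]
    | succ j =>
      simp only [SimpleGraph.Walk.getVert_cons_succ, SimpleGraph.Walk.support_cons,
        List.mem_cons]
      exact Or.inr (ih j)

/-- In a tree, every vertex other than `v0` can be assigned a distinct
incident edge (its first edge on the path to `v0`). -/
lemma tree_incident_injection {V : Type*} {G : SimpleGraph V}
    (hG : G.IsTree) (v0 : V) :
    ∃ f : V → Sym2 V, (∀ v, v ≠ v0 → f v ∈ G.edgeSet ∧ v ∈ f v) ∧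
      ∀ v v', v ≠ v0 → v' ≠ v0 → f v = f v' → v = v' := by
  classical
  choose P hP using fun v w => (hG.existsUnique_path v w)
  refine ⟨fun v => s(v, (P v v0).getVert 1), ?_, ?_⟩
  · intro v hv
    have hnil : ¬ (P v v0).Nil := SimpleGraph.Walk.not_nil_of_ne hv
    exact ⟨SimpleGraph.Walk.adj_snd hnil, by simp⟩
  · intro v v' hv hv' heq
    simp only [Sym2.eq_iff] at heq
    rcases heq with ⟨h1, _⟩ | ⟨h1, h2⟩
    · exact h1
    · exfalso
      have hnil : ¬ (P v v0).Nil := SimpleGraph.Walk.not_nil_of_ne hv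
      have hq' : ((P v v0).tail.copy h2 rfl).IsPath := by
        rw [SimpleGraph.Walk.isPath_copy]
        exact (hP v v0).1.tail
      have hPeq : (P v v0).tail.copy h2 rfl = P v' v0 := (hP v' v0).2 _ hq'
      have hvmem : v ∈ (P v v0).tail.support := by
        have h3 : v ∈ (P v' v0).support := by
          rw [h1]; exact getVert_mem_support' _ 1
        rwa [← hPeq, SimpleGraph.Walk.support_copy] at h3
      have hnodup := (hP v v0).1.support_nodup
      rw [← SimpleGraph.Walk.cons_support_tail hnil] at hnodup
      exact (List.nodup_cons.1 hnodup).1 hvmem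

/-- Lower bound on neural persistence: `NP_p(W)` is at least the `p`-norm-style
combination of the max-over-rows and max-over-columns terms. -/
theorem neuralPersistence_lower_bound (n m : ℕ)
    (W : Fin (n + 1) → Fin (m + 1) → ℝ)
    (hW : ∀ a b, W a b ∈ Set.Icc (0 : ℝ) 1)
    (hinj : Function.Injective fun q : Fin (n + 1) × Fin (m + 1) => W q.1 q.2)
    (p : ℝ) (hp : 1 ≤ p)
    (T : (completeBipartiteGraph (Fin (n + 1)) (Fin (m + 1))).Subgraph)
    (hT : IsMaxSpanningTree _ (bipWeight W) T) :
    ((∑ b, (1 - Finset.univ.sup' Finset.univ_nonempty fun a => W a b) ^ p) +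
        ∑ a, (1 - Finset.univ.sup' Finset.univ_nonempty fun b => W a b) ^ p) ^ (1 / p)
      ≤ (1 + ∑ e ∈ (Set.toFinite T.spanningCoe.edgeSet).toFinset,
            (1 - bipWeight W e) ^ p) ^ (1 / p) := by
  classical
  have hp0 : (0 : ℝ) ≤ p := le_trans zero_le_one hp
  set V := Fin (n + 1) ⊕ Fin (m + 1)
  set G := T.spanningCoe with hG
  have htree : G.IsTree := hT.2.1
  -- max incident weight
  set M : V → ℝ := Sum.elim
      (fun a => Finset.univ.sup' Finset.univ_nonempty fun b => W a b)
      (fun b => Finset.univ.sup' Finset.univ_nonempty fun a => W a b) with hM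
  have hM0 : ∀ v, 0 ≤ M v := by
    rintro (a | b) <;> simp only [hM, Sum.elim_inl, Sum.elim_inr]
    · exact le_trans (hW a 0).1
        (Finset.le_sup' (fun b => W a b) (Finset.mem_univ (0 : Fin (m + 1))))
    · exact le_trans (hW 0 b).1
        (Finset.le_sup' (fun a => W a b) (Finset.mem_univ (0 : Fin (n + 1))))
  have hM1 : ∀ v, M v ≤ 1 := by
    rintro (a | b) <;> simp only [hM, Sum.elim_inl, Sum.elim_inr]
    · exact Finset.sup'_le _ _ fun b _ => (hW a b).2
    · exact Finset.sup'_le _ _ fun a _ => (hW a b).2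
  -- structure of edges
  have hstruct : ∀ e ∈ G.edgeSet, ∃ a b, e = s(Sum.inl a, Sum.inr b) := by
    intro e
    refine Sym2.ind (fun x y he => ?_) e
    rw [SimpleGraph.mem_edgeSet] at he
    have hadj : (completeBipartiteGraph (Fin (n+1)) (Fin (m+1))).Adj x y := T.adj_sub he
    rcases x with a | b <;> rcases y with a' | b' <;>
      simp only [completeBipartiteGraph_adj, Sum.isLeft_inl, Sum.isRight_inl,
        Sum.isLeft_inr, Sum.isRight_inr] at hadj
    · simp at hadj
    · exact ⟨a, b', rfl⟩
    · exact ⟨a', b, Sym2.eq_swap⟩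
    · simp at hadj
  have hweight : ∀ e ∈ G.edgeSet, ∀ v ∈ e, bipWeight W e ≤ M v ∧ bipWeight W e ≤ 1
      ∧ 0 ≤ bipWeight W e := by
    intro e he v hv
    obtain ⟨a, b, rfl⟩ := hstruct e he
    have hval : bipWeight W s(Sum.inl a, Sum.inr b) = W a b := rfl
    rw [hval]
    refine ⟨?_, (hW a b).2, (hW a b).1⟩
    rcases Sym2.mem_iff.1 hv with rfl | rfl <;>
      simp only [hM, Sum.elim_inl, Sum.elim_inr]
    · exact Finset.le_sup' (fun b => W a b) (Finset.mem_univ b)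
    · exact Finset.le_sup' (fun a => W a b) (Finset.mem_univ a)
  obtain ⟨f, hf1, hf2⟩ := tree_incident_injection htree (Sum.inl 0 : V)
  set E := (Set.toFinite G.edgeSet).toFinset with hE
  -- sum inequality
  have key : ((∑ b, (1 - Finset.univ.sup' Finset.univ_nonempty fun a => W a b) ^ p) +
      ∑ a, (1 - Finset.univ.sup' Finset.univ_nonempty fun b => W a b) ^ p)
      ≤ 1 + ∑ e ∈ E, (1 - bipWeight W e) ^ p := by
    have hsum : ((∑ b, (1 - Finset.univ.sup' Finset.univ_nonempty fun a => W a b) ^ p) +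
        ∑ a, (1 - Finset.univ.sup' Finset.univ_nonempty fun b => W a b) ^ p)
        = ∑ v : V, (1 - M v) ^ p := by
      rw [Fintype.sum_sum_type]
      simp only [hM, Sum.elim_inl, Sum.elim_inr]
      ring
    rw [hsum]
    have hsplit : ∑ v : V, (1 - M v) ^ p
        = (1 - M (Sum.inl 0)) ^ p + ∑ v ∈ Finset.univ.erase (Sum.inl 0), (1 - M v) ^ p := by
      rw [← Finset.add_sum_erase _ _ (Finset.mem_univ (Sum.inl 0))]
    rw [hsplit]
    have h1 : (1 - M (Sum.inl 0)) ^ p ≤ 1 :=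
      Real.rpow_le_one (by linarith [hM1 (Sum.inl 0)]) (by linarith [hM0 (Sum.inl 0)]) hp0
    have h2 : ∑ v ∈ Finset.univ.erase (Sum.inl 0), (1 - M v) ^ p
        ≤ ∑ e ∈ E, (1 - bipWeight W e) ^ p := by
      have step1 : ∑ v ∈ Finset.univ.erase (Sum.inl 0), (1 - M v) ^ p
          ≤ ∑ v ∈ Finset.univ.erase (Sum.inl 0), (1 - bipWeight W (f v)) ^ p := by
        refine Finset.sum_le_sum fun v hvmem => ?_
        have hv : v ≠ Sum.inl 0 := (Finset.mem_erase.1 hvmem).1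
        obtain ⟨hfe, hvf⟩ := hf1 v hv
        have := (hweight (f v) hfe v hvf).1
        exact Real.rpow_le_rpow (by linarith [hM1 v]) (by linarith) hp0
      have step2 : ∑ v ∈ Finset.univ.erase (Sum.inl 0), (1 - bipWeight W (f v)) ^ p
          = ∑ e ∈ (Finset.univ.erase (Sum.inl 0)).image f, (1 - bipWeight W e) ^ p := by
        rw [Finset.sum_image]
        intro x hx y hy hxy
        exact hf2 x y (Finset.mem_erase.1 hx).1 (Finset.mem_erase.1 hy).1 hxy
      have step3 : ∑ e ∈ (Finset.univ.erase (Sum.inl 0)).image f, (1 - bipWeight W e) ^ p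
          ≤ ∑ e ∈ E, (1 - bipWeight W e) ^ p := by
        refine Finset.sum_le_sum_of_subset_of_nonneg ?_ ?_
        · intro e he
          obtain ⟨v, hv, rfl⟩ := Finset.mem_image.1 he
          rw [hE, Set.Finite.mem_toFinset]
          exact (hf1 v (Finset.mem_erase.1 hv).1).1
        · intro e heE _
          rw [hE, Set.Finite.mem_toFinset] at heE
          have := (hweight e heE _ (Sym2.out_fst_mem e)).2.1
          exact Real.rpow_nonneg (by linarith) p
      calc _ ≤ _ := step1
        _ = _ := step2
        _ ≤ _ := step3
    linarith
  -- conclude via rpow monotonicity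
  have hbase : 0 ≤ ((∑ b, (1 - Finset.univ.sup' Finset.univ_nonempty fun a => W a b) ^ p) +
      ∑ a, (1 - Finset.univ.sup' Finset.univ_nonempty fun b => W a b) ^ p) := by
    have h1 : 0 ≤ ∑ b, (1 - Finset.univ.sup' Finset.univ_nonempty fun a => W a b) ^ p := by
      refine Finset.sum_nonneg fun b _ => Real.rpow_nonneg ?_ p
      have := hM1 (Sum.inr b)
      simp only [hM, Sum.elim_inr] at this
      linarith
    have h2 : 0 ≤ ∑ a, (1 - Finset.univ.sup' Finset.univ_nonempty fun b => W a b) ^ p := by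
      refine Finset.sum_nonneg fun a _ => Real.rpow_nonneg ?_ p
      have := hM1 (Sum.inl a)
      simp only [hM, Sum.elim_inl] at this
      linarith
    linarith
  exact Real.rpow_le_rpow hbase key (by positivity)
end

section
/- Let W be an n-by-m matrix with entries in [0,1] and all entries distinct, defining the weighted complete bipartite graph G_W with parts A (rows) and B (columns). Let B' be the set of columns b such that the maximal entry of column b is not the maximal entry of any row. Then NP_p(W) <= ( |B \ B'| + sum over b in B' of (1 - max over a of W[a,b])^p + sum over a in A of (1 - max over b of W[a,b])^p )^(1/p). -/
open scoped Classical

open SimpleGraph in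
lemma mst_incident_max {V : Type*} [Fintype V] {G : SimpleGraph V} (w : Sym2 V → ℝ)
    {T : G.Subgraph} (hT : IsMaxSpanningTree G w T)
    {v u : V} (hadj : G.Adj v u)
    (hmax : ∀ u', G.Adj v u' → u' ≠ u → w s(v, u') < w s(v, u)) :
    T.spanningCoe.Adj v u := by
  classical
  set S := T.spanningCoe with hSdef
  have hS : S.IsTree := hT.2.1
  have hle : S ≤ G := T.spanningCoe_le
  by_contra he
  have hvu : v ≠ u := hadj.ne
  obtain ⟨p0⟩ := hS.isConnected v u
  obtain ⟨p, hp⟩ : ∃ p : S.Walk v u, p.IsPath := ⟨p0.toPath, p0.toPath.2⟩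
  cases p with
  | nil => exact hvu rfl
  | @cons _ x _ h q =>
    have hq : q.IsPath := hp.of_cons
    have hvq : v ∉ q.support := ((SimpleGraph.Walk.cons_isPath_iff _ _).mp hp).2
    have hxu : x ≠ u := by rintro rfl; exact he h
    set f : Sym2 V := s(v, x) with hf
    set e : Sym2 V := s(v, u) with hedef
    have hfS : f ∈ S.edgeSet := h
    have heS : e ∉ S.edgeSet := he
    have hfq : f ∉ q.edges := fun hmem => hvq (SimpleGraph.Walk.fst_mem_support_of_mem_edges q hmem)
    have hend : ¬ e.IsDiag := by simp [hedef, hvu]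
    have hef : e ≠ f := by
      intro hh
      rw [hedef, hf, Sym2.eq_iff] at hh
      rcases hh with ⟨-, rfl⟩ | ⟨rfl, rfl⟩
      · exact he h
      · exact hvu rfl
    -- the new graph
    set S' : SimpleGraph V := fromEdgeSet ((S.edgeSet \ {f}) ∪ {e}) with hS'
    have hES' : S'.edgeSet = (S.edgeSet \ {f}) ∪ {e} := by
      rw [hS', edgeSet_fromEdgeSet]
      ext a
      simp only [Set.mem_diff, Set.mem_union, Set.mem_singleton_iff, Set.mem_setOf_eq]
      constructor
      · rintro ⟨h1, -⟩; exact h1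
      · intro h1
        refine ⟨h1, ?_⟩
        rcases h1 with ⟨haS, -⟩ | rfl
        · exact S.not_isDiag_of_mem_edgeSet haS
        · exact hend
    have hle' : S' ≤ G := by
      intro a b hab
      have : s(a, b) ∈ S'.edgeSet := hab
      rw [hES'] at this
      rcases this with ⟨hS1, -⟩ | h1
      · exact hle hS1
      · rw [Set.mem_singleton_iff] at h1
        rw [← mem_edgeSet, h1]
        exact hadj
    -- edge set of S minus f
    have hESf : (S \ fromEdgeSet {f}).edgeSet = S.edgeSet \ {f} := by
      rw [edgeSet_sdiff, edgeSet_fromEdgeSet, edgeSet_sdiff_sdiff_isDiag]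
    have hSfS' : (S \ fromEdgeSet {f}) ≤ S' := by
      intro a b hab
      have h1 : s(a, b) ∈ S.edgeSet \ {f} := by rw [← hESf]; exact hab
      rw [← mem_edgeSet, hES']
      exact Or.inl h1
    -- f is a bridge of S
    have hbr : ¬ (S \ fromEdgeSet {f}).Reachable v x :=
      ((isAcyclic_iff_forall_adj_isBridge.mp hS.IsAcyclic) h)
    -- x and u are reachable in S - f
    have reach_xu : (S \ fromEdgeSet {f}).Reachable x u := by
      refine ⟨q.transfer _ fun e' he' => ?_⟩
      rw [hESf]
      exact ⟨q.edges_subset_edgeSet he', fun hh => hfq (hh ▸ he')⟩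
    -- S' is acyclic
    have hacyc : S'.IsAcyclic := by
      intro a c hc
      by_cases hec : e ∈ c.edges
      · have hreach : (S' \ fromEdgeSet {e}).Reachable v u := by
          have := (adj_and_reachable_delete_edges_iff_exists_cycle (G := S') (v := v) (w := u)).mpr
            ⟨a, c, hc, by rwa [← hedef]⟩
          exact this.2
        have hmono : (S' \ fromEdgeSet {e}) ≤ (S \ fromEdgeSet {f}) := by
          intro a' b' hab
          have h1 : s(a', b') ∈ (S' \ fromEdgeSet {e}).edgeSet := hab
          rw [edgeSet_sdiff, hES'] at h1
          obtain ⟨(h2 | h2), h3⟩ := h1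
          · rw [← mem_edgeSet, hESf]; exact h2
          · exfalso
            refine h3 ?_
            rw [edgeSet_fromEdgeSet]
            refine ⟨h2, ?_⟩
            rw [Set.mem_singleton_iff] at h2
            rw [h2]; exact hend
        have : (S \ fromEdgeSet {f}).Reachable v x :=
          (hreach.mono hmono).trans reach_xu.symm
        exact hbr this
      · have hsub : ∀ e' ∈ c.edges, e' ∈ S.edgeSet := by
          intro e' he'
          have h1 : e' ∈ S'.edgeSet := c.edges_subset_edgeSet he'
          rw [hES'] at h1
          rcases h1 with ⟨h2, -⟩ | h2
          · exact h2
          · rw [Set.mem_singleton_iff] at h2; exact absurd (h2 ▸ he') hec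
        exact hS.IsAcyclic _ (hc.transfer hsub)
    -- S' is connected
    have hadjS'vu : S'.Adj v u := by
      rw [hS', fromEdgeSet_adj]
      exact ⟨Or.inr rfl, hvu⟩
    have reach'vx : S'.Reachable v x :=
      (hadjS'vu.reachable).trans ((reach_xu.symm.mono hSfS'))
    have hkey : ∀ a b : V, S.Adj a b → S'.Reachable a b := by
      intro a b hab
      by_cases hfe : s(a, b) = f
      · rw [hf, Sym2.eq_iff] at hfe
        rcases hfe with ⟨rfl, rfl⟩ | ⟨rfl, rfl⟩
        · exact reach'vx
        · exact reach'vx.symm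
      · refine Adj.reachable ?_
        rw [hS', fromEdgeSet_adj]
        exact ⟨Or.inl ⟨hab, hfe⟩, hab.ne⟩
    have hconn : S'.Connected := by
      have hpre : S'.Preconnected := by
        intro a b
        obtain ⟨r⟩ := hS.isConnected a b
        induction r with
        | nil => exact Reachable.refl _
        | cons hadj' r ih => exact (hkey _ _ hadj').trans ih
      haveI : Nonempty V := hS.isConnected.nonempty
      exact Connected.mk hpre
    have hS'tree : S'.IsTree := ⟨hconn, hacyc⟩
    -- weights
    have hwle : graphWeight S' w ≤ graphWeight S w := by
      have hsc : (SimpleGraph.toSubgraph S' hle').spanningCoe = S' := by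
        ext a b
        rfl
      have := hT.2.2 (SimpleGraph.toSubgraph S' hle')
        (SimpleGraph.toSubgraph.isSpanning _ hle') (by rwa [hsc])
      rwa [hsc] at this
    have hFeq : (Set.toFinite S'.edgeSet).toFinset
        = insert e (((Set.toFinite S.edgeSet).toFinset).erase f) := by
      ext a
      simp only [Set.Finite.mem_toFinset, hES', Finset.mem_insert, Finset.mem_erase,
        Set.Finite.mem_toFinset, Set.mem_union, Set.mem_diff, Set.mem_singleton_iff]
      tauto
    have hfF : f ∈ (Set.toFinite S.edgeSet).toFinset := by
      rwa [Set.Finite.mem_toFinset]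
    have heF : e ∉ ((Set.toFinite S.edgeSet).toFinset).erase f := by
      simp only [Finset.mem_erase, Set.Finite.mem_toFinset]
      tauto
    have hW' : graphWeight S' w = w e + (graphWeight S w - w f) := by
      rw [graphWeight, hFeq, Finset.sum_insert heF, Finset.sum_erase_eq_sub hfF]
      rfl
    have hwef : w e ≤ w f := by
      rw [hW'] at hwle
      linarith
    have hwfe : w f < w e := hmax x (hle h) hxu
    linarith

@[simp] lemma bipWeight_mk {n m : ℕ} (W : Fin n → Fin m → ℝ) (a : Fin n) (b : Fin m) :
    bipWeight W s(Sum.inl a, Sum.inr b) = W a b := rfl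

set_option maxHeartbeats 1000000 in
/-- Upper bound on neural persistence, in terms of the set `B'` of columns
whose maximal entry is not the maximal entry of any row. -/
theorem neuralPersistence_upper_bound (n m : ℕ)
    (W : Fin (n + 1) → Fin (m + 1) → ℝ)
    (hW : ∀ a b, W a b ∈ Set.Icc (0 : ℝ) 1)
    (hinj : Function.Injective fun q : Fin (n + 1) × Fin (m + 1) => W q.1 q.2)
    (p : ℝ) (hp : 1 ≤ p)
    (T : (completeBipartiteGraph (Fin (n + 1)) (Fin (m + 1))).Subgraph)
    (hT : IsMaxSpanningTree _ (bipWeight W) T)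
    (B' : Finset (Fin (m + 1)))
    (hB' : B' = Finset.univ.filter fun b =>
      ∀ a, W a b ≠ Finset.univ.sup' Finset.univ_nonempty fun b' => W a b') :
    (1 + ∑ e ∈ (Set.toFinite T.spanningCoe.edgeSet).toFinset,
          (1 - bipWeight W e) ^ p) ^ (1 / p)
      ≤ (((Finset.univ \ B').card : ℝ) +
          (∑ b ∈ B', (1 - Finset.univ.sup' Finset.univ_nonempty fun a => W a b) ^ p) +
          ∑ a, (1 - Finset.univ.sup' Finset.univ_nonempty fun b => W a b) ^ p) ^ (1 / p) := by
  classical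
  set S := T.spanningCoe with hSdef
  have hS : S.IsTree := hT.2.1
  have hle : S ≤ completeBipartiteGraph (Fin (n + 1)) (Fin (m + 1)) := T.spanningCoe_le
  set F := (Set.toFinite S.edgeSet).toFinset with hF
  set w := bipWeight W with hw
  set g : Sym2 (Fin (n + 1) ⊕ Fin (m + 1)) → ℝ := fun e => (1 - w e) ^ p with hg
  set rmax : Fin (n + 1) → ℝ :=
    fun a => Finset.univ.sup' Finset.univ_nonempty fun b' => W a b' with hrmax
  set cmax : Fin (m + 1) → ℝ :=
    fun b => Finset.univ.sup' Finset.univ_nonempty fun a => W a b with hcmax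
  have hp0 : (0 : ℝ) ≤ p := le_trans zero_le_one hp
  -- argmaxes
  choose bmax hbmax using fun a : Fin (n + 1) =>
    Finset.exists_mem_eq_sup' Finset.univ_nonempty fun b' => W a b'
  choose amax hamax using fun b : Fin (m + 1) =>
    Finset.exists_mem_eq_sup' Finset.univ_nonempty fun a => W a b
  have hbmax' : ∀ a, rmax a = W a (bmax a) := fun a => (hbmax a).2
  have hamax' : ∀ b, cmax b = W (amax b) b := fun b => (hamax b).2
  have hle_r : ∀ a b', W a b' ≤ rmax a := by
    intro a b'
    rw [hrmax]
    exact Finset.le_sup' (fun b' => W a b') (Finset.mem_univ b')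
  have hle_c : ∀ b a', W a' b ≤ cmax b := by
    intro b a'
    rw [hcmax]
    exact Finset.le_sup' (fun a' => W a' b) (Finset.mem_univ a')
  have hinj2 : ∀ (a a' : Fin (n + 1)) (b b' : Fin (m + 1)),
      W a b = W a' b' → a = a' ∧ b = b' := by
    intro a a' b b' hh
    have h2 : ((a, b) : Fin (n + 1) × Fin (m + 1)) = (a', b') :=
      hinj (show (fun q : Fin (n + 1) × Fin (m + 1) => W q.1 q.2) (a, b)
        = (fun q : Fin (n + 1) × Fin (m + 1) => W q.1 q.2) (a', b') from hh)
    exact Prod.ext_iff.mp h2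
  -- row max edges are in the tree
  have hrow : ∀ a, s(Sum.inl a, Sum.inr (bmax a)) ∈ S.edgeSet := by
    intro a
    refine (SimpleGraph.mem_edgeSet _).mpr
      (mst_incident_max (v := Sum.inl a) (u := Sum.inr (bmax a)) w hT (by simp) ?_)
    rintro (a' | b') hadj hne
    · simp at hadj
    · have hble : W a b' ≤ W a (bmax a) := (hbmax' a) ▸ hle_r a b'
      have hbne : b' ≠ bmax a := fun hh => hne (by rw [hh])
      have hwne : W a b' ≠ W a (bmax a) := fun hh => hbne (hinj2 _ _ _ _ hh).2
      have hlt : W a b' < W a (bmax a) := lt_of_le_of_ne hble hwne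
      calc w s(Sum.inl a, Sum.inr b') = W a b' := rfl
        _ < W a (bmax a) := hlt
        _ = w s(Sum.inl a, Sum.inr (bmax a)) := rfl
  -- column max edges are in the tree
  have hcol : ∀ b, s(Sum.inl (amax b), Sum.inr b) ∈ S.edgeSet := by
    intro b
    have : S.Adj (Sum.inr b) (Sum.inl (amax b)) := by
      refine mst_incident_max (v := Sum.inr b) (u := Sum.inl (amax b)) w hT (by simp) ?_
      rintro (a' | b') hadj hne
      · have hale : W a' b ≤ W (amax b) b := (hamax' b) ▸ hle_c b a'
        have hane : a' ≠ amax b := fun hh => hne (by rw [hh])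
        have hwne : W a' b ≠ W (amax b) b := fun hh => hane (hinj2 _ _ _ _ hh).1
        have : W a' b < W (amax b) b := lt_of_le_of_ne hale hwne
        calc w s(Sum.inr b, Sum.inl a') = W a' b := rfl
          _ < W (amax b) b := this
          _ = w s(Sum.inr b, Sum.inl (amax b)) := rfl
      · simp at hadj
    exact (SimpleGraph.mem_edgeSet _).mpr this.symm
  -- shape of edges
  have hshape : ∀ e ∈ F, ∃ a b, e = s(Sum.inl a, Sum.inr b) := by
    intro e heF
    rw [hF, Set.Finite.mem_toFinset] at heF
    have heG : e ∈ (completeBipartiteGraph (Fin (n + 1)) (Fin (m + 1))).edgeSet :=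
      (SimpleGraph.edgeSet_subset_edgeSet.mpr hle) heF
    induction e using Sym2.ind with
    | _ x y =>
      rw [SimpleGraph.mem_edgeSet] at heG
      rcases x with a | b <;> rcases y with a' | b'
      · simp at heG
      · exact ⟨a, b', rfl⟩
      · exact ⟨a', b, Sym2.eq_swap⟩
      · simp at heG
  -- each g value on F is in [0,1]
  have hg01 : ∀ e ∈ F, 0 ≤ g e ∧ g e ≤ 1 := by
    intro e heF
    obtain ⟨a, b, rfl⟩ := hshape e heF
    have h1 : w s(Sum.inl a, Sum.inr b) = W a b := rfl
    have h2 := hW a b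
    rw [Set.mem_Icc] at h2
    constructor
    · exact Real.rpow_nonneg (by rw [h1]; linarith) p
    · exact Real.rpow_le_one (by rw [h1]; linarith) (by rw [h1]; linarith) hp0
  -- the row and column edge finsets
  set R : Finset (Sym2 (Fin (n + 1) ⊕ Fin (m + 1))) :=
    Finset.image (fun a => s(Sum.inl a, Sum.inr (bmax a))) Finset.univ with hR
  set C : Finset (Sym2 (Fin (n + 1) ⊕ Fin (m + 1))) :=
    Finset.image (fun b => s(Sum.inl (amax b), Sum.inr b)) B' with hC
  have hRinj : Set.InjOn (fun a => s(Sum.inl a, Sum.inr (bmax a)))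
      (Finset.univ : Finset (Fin (n+1))) := by
    intro a _ a' _ hh
    simp only [Sym2.eq_iff] at hh
    rcases hh with ⟨h1, -⟩ | ⟨h1, -⟩ <;> simpa using h1
  have hCinj : Set.InjOn (fun b => s(Sum.inl (amax b), Sum.inr b)) (B' : Set (Fin (m+1))) := by
    intro b _ b' _ hh
    simp only [Sym2.eq_iff] at hh
    rcases hh with ⟨-, h1⟩ | ⟨h1, -⟩ <;> simp_all
  have hRF : R ⊆ F := by
    intro e he
    rw [hR, Finset.mem_image] at he
    obtain ⟨a, -, rfl⟩ := he
    rw [hF, Set.Finite.mem_toFinset]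
    exact hrow a
  have hCF : C ⊆ F := by
    intro e he
    rw [hC, Finset.mem_image] at he
    obtain ⟨b, -, rfl⟩ := he
    rw [hF, Set.Finite.mem_toFinset]
    exact hcol b
  have hmemB' : ∀ b ∈ B', ∀ a, W a b ≠ rmax a := by
    intro b hb
    rw [hB', Finset.mem_filter] at hb
    exact hb.2
  have hdisj : Disjoint R C := by
    rw [Finset.disjoint_left]
    intro e heR heC
    rw [hR, Finset.mem_image] at heR
    rw [hC, Finset.mem_image] at heC
    obtain ⟨a, -, rfl⟩ := heR
    obtain ⟨b, hb, hh⟩ := heC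
    simp only [Sym2.eq_iff] at hh
    rcases hh with ⟨h1, h2⟩ | ⟨h1, h2⟩
    · have hb1 : bmax a = b := by simpa using h2.symm
      refine hmemB' b hb a ?_
      rw [← hb1, hbmax' a]
    · exact absurd h1 (by simp)
  have hcardR : R.card = n + 1 := by
    rw [hR, Finset.card_image_of_injOn hRinj, Finset.card_univ, Fintype.card_fin]
  have hcardC : C.card = B'.card := by
    rw [hC, Finset.card_image_of_injOn hCinj]
  have hRCF : R ∪ C ⊆ F := Finset.union_subset hRF hCF
  have hcardRC : (R ∪ C).card = n + 1 + B'.card := by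
    rw [Finset.card_union_of_disjoint hdisj, hcardR, hcardC]
  -- card F
  have hcardF : F.card = n + m + 1 := by
    have h1 := hS.card_edgeFinset
    have h2 : F = S.edgeFinset := by
      ext e
      rw [hF, Set.Finite.mem_toFinset, SimpleGraph.mem_edgeFinset]
    rw [h2]
    have h3 : Fintype.card (Fin (n + 1) ⊕ Fin (m + 1)) = n + 1 + (m + 1) := by
      simp
    omega
  have hBle : B'.card ≤ m := by
    have := Finset.card_le_card hRCF
    omega
  -- sum computations
  have hsumR : ∑ e ∈ R, g e = ∑ a, (1 - rmax a) ^ p := by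
    rw [hR, Finset.sum_image (fun a ha a' ha' => hRinj ha ha')]
    refine Finset.sum_congr rfl fun a _ => ?_
    show (1 - w s(Sum.inl a, Sum.inr (bmax a))) ^ p = (1 - rmax a) ^ p
    rw [hbmax' a]
    rfl
  have hsumC : ∑ e ∈ C, g e = ∑ b ∈ B', (1 - cmax b) ^ p := by
    rw [hC, Finset.sum_image (fun b hb b' hb' => hCinj hb hb')]
    refine Finset.sum_congr rfl fun b _ => ?_
    show (1 - w s(Sum.inl (amax b), Sum.inr b)) ^ p = (1 - cmax b) ^ p
    rw [hamax' b]
    rfl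
  have hsumrest : ∑ e ∈ F \ (R ∪ C), g e ≤ ((m - B'.card : ℕ) : ℝ) := by
    have h1 : ∑ e ∈ F \ (R ∪ C), g e ≤ (F \ (R ∪ C)).card • (1 : ℝ) := by
      refine Finset.sum_le_card_nsmul _ _ _ fun e he => ?_
      exact (hg01 e (Finset.mem_sdiff.mp he).1).2
    have h2 : (F \ (R ∪ C)).card = m - B'.card := by
      rw [Finset.card_sdiff_of_subset hRCF, hcardF, hcardRC]
      omega
    rw [h2] at h1
    simpa using h1
  -- main inequality on inner sums
  have hsplit : ∑ e ∈ F, g e = (∑ e ∈ R, g e + ∑ e ∈ C, g e) + ∑ e ∈ F \ (R ∪ C), g e := by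
    rw [← Finset.sum_union hdisj, ← Finset.sum_sdiff hRCF]
    ring
  have hinner : 1 + ∑ e ∈ F, g e
      ≤ ((Finset.univ \ B').card : ℝ)
        + (∑ b ∈ B', (1 - cmax b) ^ p) + ∑ a, (1 - rmax a) ^ p := by
    have hcard' : ((Finset.univ \ B').card : ℝ) = (m + 1 : ℝ) - B'.card := by
      rw [Finset.card_sdiff_of_subset (Finset.subset_univ _), Finset.card_univ, Fintype.card_fin]
      have : B'.card ≤ m + 1 := by omega
      push_cast [Nat.cast_sub this]
      ring
    have hcast : ((m - B'.card : ℕ) : ℝ) = (m : ℝ) - B'.card := by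
      push_cast [Nat.cast_sub hBle]
      ring
    rw [hcast] at hsumrest
    rw [hsplit, hsumR, hsumC, hcard']
    linarith
  -- conclude with rpow monotonicity
  have hnn : 0 ≤ 1 + ∑ e ∈ F, g e := by
    have : 0 ≤ ∑ e ∈ F, g e := Finset.sum_nonneg fun e he => (hg01 e he).1
    linarith
  exact Real.rpow_le_rpow (z := 1 / p) hnn hinner (by positivity)
end
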